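/- Let f(w) = 1/(1 − |w|²) on the open unit disk of ℂ. Then the determinant of the 2×2 matrix [[f, ∂f/∂w], [∂f/∂w̄, ∂²f/∂w̄∂w + f³]] equals 2/(1 − |w|²)⁴ at every point of the unit disk. -/

import Mathlib

/-- The Wirtinger derivative `∂f/∂w = (1/2)(∂f/∂x − i ∂f/∂y)`. -/
noncomputable def wdw (f : ℂ → ℂ) (z : ℂ) : ℂ :=
  (2 : ℂ)⁻¹ * (fderiv ℝ f z 1 - Complex.I * fderiv ℝ f z Complex.I)

/-- The Wirtinger derivative `∂f/∂w̄ = (1/2)(∂f/∂x + i ∂f/∂y)`. -/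
noncomputable def wdwbar (f : ℂ → ℂ) (z : ℂ) : ℂ :=
  (2 : ℂ)⁻¹ * (fderiv ℝ f z 1 + Complex.I * fderiv ℝ f z Complex.I)

/-- The function `f(w) = 1/(1 − |w|²) = 1/(1 − w w̄)` on the unit disk. -/
noncomputable def fGram : ℂ → ℂ := fun z => (1 - z * (starRingEnd ℂ) z)⁻¹

/-!
An `ℝ`-derivative of the form `v ↦ a v + b v̄` has Wirtinger derivatives `∂ = a`, `∂̄ = b`, and this
form is stable under products, powers and inverses. For `f = (1 - w w̄)⁻¹` this gives `∂f = w̄ f²`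
and `∂̄f = w f²` on the disk, hence `∂̄∂f = f² + 2|w|² f³` there. The determinant is then
`f³ + f⁴ + |w|² f⁴ = f⁴ (f⁻¹ + 1 + |w|²) = 2 f⁴`.
-/

open Complex ComplexConjugate Filter Topology

noncomputable def wirtingerCLM (a b : ℂ) : ℂ →L[ℝ] ℂ :=
  a • ContinuousLinearMap.id ℝ ℂ + b • (conjCLE : ℂ →L[ℝ] ℂ)

@[simp]
theorem wirtingerCLM_apply (a b v : ℂ) : wirtingerCLM a b v = a * v + b * conj v := by
  simp [wirtingerCLM]

/-- Every `ℝ`-linear map `ℂ → ℂ` is `wirtingerCLM a b` for unique `a, b`, so this records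
`∂f(z) = a` and `∂̄f(z) = b` together with real differentiability. -/
def HasWirtingerDerivAt (f : ℂ → ℂ) (a b z : ℂ) : Prop :=
  HasFDerivAt f (wirtingerCLM a b) z

namespace HasWirtingerDerivAt

variable {f g : ℂ → ℂ} {a b c d z : ℂ}

theorem wdw_eq (h : HasWirtingerDerivAt f a b z) : wdw f z = a := by
  rw [wdw, h.fderiv]
  simp only [wirtingerCLM_apply, map_one, conj_I]
  linear_combination (-(a - b) / 2) * I_sq

theorem wdwbar_eq (h : HasWirtingerDerivAt f a b z) : wdwbar f z = b := by
  rw [wdwbar, h.fderiv]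
  simp only [wirtingerCLM_apply, map_one, conj_I]
  linear_combination ((a - b) / 2) * I_sq

theorem mul (hf : HasWirtingerDerivAt f a b z) (hg : HasWirtingerDerivAt g c d z) :
    HasWirtingerDerivAt (fun x ↦ f x * g x) (f z * c + g z * a) (f z * d + g z * b) z :=
  (HasFDerivAt.mul hf hg).congr_fderiv <| by
    ext1 v
    simp only [add_apply, smul_apply, wirtingerCLM_apply, smul_eq_mul]
    ring

theorem pow (hf : HasWirtingerDerivAt f a b z) (n : ℕ) :
    HasWirtingerDerivAt (fun x ↦ f x ^ n) (n * f z ^ (n - 1) * a) (n * f z ^ (n - 1) * b) z :=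
  (HasFDerivAt.pow hf n).congr_fderiv <| by
    ext1 v
    simp only [smul_apply, wirtingerCLM_apply, nsmul_eq_mul, smul_eq_mul]
    ring

theorem inv (hf : HasWirtingerDerivAt f a b z) (hz : f z ≠ 0) :
    HasWirtingerDerivAt (fun x ↦ (f x)⁻¹) (-(f z)⁻¹ ^ 2 * a) (-(f z)⁻¹ ^ 2 * b) z :=
  ((hasFDerivAt_inv' (𝕜 := ℝ) hz).comp z hf).congr_fderiv <| by
    ext1 v
    simp only [ContinuousLinearMap.comp_apply, neg_apply, ContinuousLinearMap.mulLeftRight_apply,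
      wirtingerCLM_apply]
    ring

theorem const_sub (hf : HasWirtingerDerivAt f a b z) (c : ℂ) :
    HasWirtingerDerivAt (fun x ↦ c - f x) (-a) (-b) z :=
  (HasFDerivAt.const_sub hf c).congr_fderiv <| by
    ext1 v
    simp only [neg_apply, wirtingerCLM_apply]
    ring

theorem congr_of_eventuallyEq (hf : HasWirtingerDerivAt f a b z) (h : g =ᶠ[𝓝 z] f) :
    HasWirtingerDerivAt g a b z :=
  HasFDerivAt.congr_of_eventuallyEq hf h

end HasWirtingerDerivAt

theorem hasWirtingerDerivAt_id (z : ℂ) : HasWirtingerDerivAt (fun x ↦ x) 1 0 z :=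
  (hasFDerivAt_id z).congr_fderiv <| by ext1 v; simp

theorem hasWirtingerDerivAt_conj (z : ℂ) : HasWirtingerDerivAt conj 0 1 z :=
  (conjCLE : ℂ →L[ℝ] ℂ).hasFDerivAt.congr_fderiv <| by ext1 v; simp

theorem one_sub_mul_conj_ne_zero {z : ℂ} (hz : ‖z‖ < 1) : 1 - z * conj z ≠ 0 := by
  rw [mul_conj, normSq_eq_norm_sq, sub_ne_zero]
  exact_mod_cast (pow_lt_one₀ (norm_nonneg z) hz two_ne_zero).ne'

theorem hasWirtingerDerivAt_fGram {z : ℂ} (hz : ‖z‖ < 1) :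
    HasWirtingerDerivAt fGram (conj z * fGram z ^ 2) (z * fGram z ^ 2) z := by
  have h := (((hasWirtingerDerivAt_id z).mul (hasWirtingerDerivAt_conj z)).const_sub 1).inv
    (one_sub_mul_conj_ne_zero hz)
  unfold fGram
  convert h using 1 <;> ring

theorem wdw_fGram_eventuallyEq {w : ℂ} (hw : ‖w‖ < 1) :
    wdw fGram =ᶠ[𝓝 w] fun z ↦ conj z * fGram z ^ 2 := by
  filter_upwards [Metric.isOpen_ball.mem_nhds (mem_ball_zero_iff.2 hw)] with z hz
  exact (hasWirtingerDerivAt_fGram (mem_ball_zero_iff.1 hz)).wdw_eq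

theorem hasWirtingerDerivAt_wdw_fGram {w : ℂ} (hw : ‖w‖ < 1) :
    HasWirtingerDerivAt (wdw fGram) (2 * conj w ^ 2 * fGram w ^ 3)
      (fGram w ^ 2 + 2 * w * conj w * fGram w ^ 3) w := by
  have h := (hasWirtingerDerivAt_conj w).mul ((hasWirtingerDerivAt_fGram hw).pow 2)
  refine HasWirtingerDerivAt.congr_of_eventuallyEq ?_ (wdw_fGram_eventuallyEq hw)
  convert h using 1 <;> ring

/-- For `f(w) = 1/(1 − |w|²)`, the determinant of
`[[f, ∂f/∂w], [∂f/∂w̄, ∂²f/∂w̄∂w + f³]]` equals `2/(1 − |w|²)⁴` on the unit disk. -/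
theorem stmt9 (w : ℂ) (hw : ‖w‖ < 1) :
    Matrix.det
      !![fGram w, wdw fGram w;
         wdwbar fGram w, wdwbar (fun z => wdw fGram z) w + (fGram w) ^ 3]
      = 2 / (1 - w * (starRingEnd ℂ) w) ^ 4 := by
  have hf := hasWirtingerDerivAt_fGram hw
  rw [Matrix.det_fin_two_of, hf.wdw_eq, hf.wdwbar_eq, (hasWirtingerDerivAt_wdw_fGram hw).wdwbar_eq,
    fGram]
  field_simp [one_sub_mul_conj_ne_zero hw]
  ring
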